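/- For every real b and every integer n ≥ 1: Σ_{k=0}^{n} (-n)_k (b)_k (b+2k) / (Γ(b+n+k+1) · k!) = 0. -/
import Mathlib


open Finset Real

/-- Pochhammer symbol (rising factorial) `(a)_k`. -/
noncomputable def poch (a : ℝ) (k : ℕ) : ℝ := (ascPochhammer ℝ k).eval a

/-- Classical Laguerre polynomial `L_n^{(α)}(x)` for arbitrary parameter α. -/
noncomputable def lag (α : ℝ) (n : ℕ) (x : ℝ) : ℝ :=
  ∑ k ∈ Finset.range (n + 1),
    (-1 : ℝ) ^ k * (poch (α + k + 1) (n - k) / (Nat.factorial (n - k))) *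
      x ^ k / (Nat.factorial k)

/-- Classical Jacobi polynomial `P_n^{(α,β)}(x)` for arbitrary parameters. -/
noncomputable def jac (α β : ℝ) (n : ℕ) (x : ℝ) : ℝ :=
  ∑ k ∈ Finset.range (n + 1),
    (poch ((n : ℝ) + α + β + 1) k / (Nat.factorial k)) *
      (poch (α + k + 1) (n - k) / (Nat.factorial (n - k))) * ((x - 1) / 2) ^ k

/-- Generalized binomial coefficient `C(x, k)`. -/
noncomputable def genBinom (x : ℝ) (k : ℕ) : ℝ :=
  (∏ j ∈ Finset.range k, (x - j)) / (Nat.factorial k)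

/-- Charlier polynomial `C_n^{(a)}(x)`. -/
noncomputable def charlier (a : ℝ) (n : ℕ) (x : ℝ) : ℝ :=
  ∑ k ∈ Finset.range (n + 1), genBinom x k * (-a) ^ (n - k) / (Nat.factorial (n - k))

lemma poch_succ (a : ℝ) (k : ℕ) : poch a (k+1) = poch a k * (a + k) := by
  simp [poch, ascPochhammer_succ_eval]

lemma poch_neg_nat (n : ℕ) : poch (-(n : ℝ)) (n+1) = 0 := by
  induction n with
  | zero => simp [poch]
  | succ n ih =>
    have : poch (-(↑(n+1) : ℝ)) (n+2) = (-(↑(n+1) : ℝ)) * poch (-(↑(n+1):ℝ) + 1) (n+1) := by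
      simp [poch, ascPochhammer_succ_left, Polynomial.eval_comp]
    rw [this]
    have h2 : (-(↑(n+1):ℝ) + 1) = -(n : ℝ) := by push_cast; ring
    rw [h2, ih, mul_zero]

lemma inv_gamma (x : ℝ) : x / Real.Gamma (x + 1) = 1 / Real.Gamma x := by
  by_cases h : Real.Gamma x = 0
  · rw [h]
    rcases (Real.Gamma_eq_zero_iff x).mp h with ⟨m, rfl⟩
    rcases Nat.eq_zero_or_pos m with hm | hm
    · subst hm; simp
    · have : Real.Gamma (-(m:ℝ) + 1) = 0 := by
        rw [Real.Gamma_eq_zero_iff]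
        exact ⟨m - 1, by push_cast [hm]; ring⟩
      simp [this]
  · have hx : x ≠ 0 := by rintro rfl; simp [Real.Gamma_zero] at h
    rw [Real.Gamma_add_one hx, div_mul_eq_div_div, div_self hx]

lemma gamma_step (c d x : ℝ) :
    c * x / (Real.Gamma (x + 1) * d) = c / (Real.Gamma x * d) := by
  rw [show c * x / (Real.Gamma (x+1) * d) = c * (x / Real.Gamma (x+1)) / d by ring,
    inv_gamma]
  ring

theorem stmt2 (b : ℝ) (n : ℕ) (hn : 1 ≤ n) :
    ∑ k ∈ Finset.range (n + 1),
        poch (-(n : ℝ)) k * poch b k * (b + 2 * k) /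
          (Real.Gamma (b + n + k + 1) * (Nat.factorial k)) = 0 := by
  set f : ℕ → ℝ := fun k =>
    poch (-(n : ℝ)) k * poch b k * k * (b + n + k) /
      (Real.Gamma (b + n + k + 1) * (Nat.factorial k)) with hf
  have key : ∀ k : ℕ,
      poch (-(n : ℝ)) k * poch b k * (b + 2 * k) /
        (Real.Gamma (b + n + k + 1) * (Nat.factorial k)) * n = f k - f (k+1) := by
    intro k
    have hfk : (Nat.factorial k : ℝ) ≠ 0 := Nat.cast_ne_zero.mpr (Nat.factorial_ne_zero k)
    have hk1 : ((k:ℝ) + 1) ≠ 0 := by positivity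
    have hstep : f (k+1) = poch (-(n : ℝ)) k * (-(n:ℝ) + k) * (poch b k * (b + k)) * (k+1) /
        (Real.Gamma (b + n + k + 1) * ((k+1) * Nat.factorial k)) := by
      have hg := gamma_step
        (poch (-(n : ℝ)) k * (-(n:ℝ) + k) * (poch b k * (b + k)) * (k+1))
        ((k+1) * Nat.factorial k) (b + n + k + 1)
      simp only [hf, poch_succ, Nat.factorial_succ]
      push_cast
      rw [show b + (n:ℝ) + ((k:ℝ)+1) + 1 = (b + n + k + 1) + 1 by ring]
      rw [← hg]
      ring
    rw [hstep, hf]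
    by_cases hG : Real.Gamma (b + n + k + 1) = 0
    · simp [hG]
    · field_simp
      ring
  have hsum : ∀ x ∈ Finset.range (n+1),
      poch (-(n : ℝ)) x * poch b x * (b + 2 * x) /
        (Real.Gamma (b + n + x + 1) * (Nat.factorial x)) * n = f x - f (x+1) :=
    fun x _ => key x
  have htel := Finset.sum_range_sub' f (n+1)
  have h0 : f 0 = 0 := by simp [hf]
  have hN : f (n+1) = 0 := by simp [hf, poch_neg_nat]
  have : (∑ k ∈ Finset.range (n + 1),
      poch (-(n : ℝ)) k * poch b k * (b + 2 * k) /
        (Real.Gamma (b + n + k + 1) * (Nat.factorial k))) * n = 0 := by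
    rw [Finset.sum_mul, Finset.sum_congr rfl hsum, htel, h0, hN, sub_zero]
  have hn' : (n : ℝ) ≠ 0 := Nat.cast_ne_zero.mpr (by omega)
  exact (mul_eq_zero.mp this).resolve_right hn'
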